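/- arXiv:2306.12879 — 2 statements merged into one kernel-verified Lean document; each statement's English description precedes it below -/
import Mathlib

section
/- Let P_0 be a positive definite symmetric n×n real matrix. Then there exist a constant σ_0 > 0 (depending only on n), unit vectors ξ_1, …, ξ_{n*} in S^{n-1} with n* = n(n+1)/2, and linear maps L_i from the space of symmetric n×n matrices to ℝ, such that every symmetric matrix P satisfies P = Σ_{i=1}^{n*} L_i(P) ξ_i ⊗ ξ_i, and moreover L_i(P) > 0 for every i whenever |P − P_0| ≤ σ_0. -/
/-!
The rank-one matrices `(e_k + e_l)(e_k + e_l)ᵀ`, `k ≤ l`, span the symmetric matrices, and the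
coefficients of a symmetric `Q` in this frame are `Q k l` off the diagonal and
`(2 Q k k - ∑ j, Q k j) / 4` on it. They are all positive for `Q = (n + 1) • 1 + 𝟙𝟙ᵀ`, which is
positive definite. Any positive definite `P₀` is congruent to this `Q`, say `P₀ = A Q Aᵀ`, and the
congruence turns the frame into `(A w)(A w)ᵀ`, the coefficients of `P` being those of
`A⁻¹ P A⁻ᵀ`. Normalising the vectors `A w` only rescales the coefficients, and since there are
finitely many coefficient maps, all linear hence continuous, they stay positive near `P₀`.
-/

attribute [local instance] Matrix.frobeniusNormedAddCommGroup

lemma exists_pos_forall_dist_le_forall_pos {X ι : Type*} [PseudoMetricSpace X] [Finite ι]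
    {f : ι → X → ℝ} (hf : ∀ i, Continuous (f i)) {x₀ : X} (h₀ : ∀ i, 0 < f i x₀) :
    ∃ σ > 0, ∀ x, dist x x₀ ≤ σ → ∀ i, 0 < f i x := by
  have : ∀ᶠ x in nhds x₀, ∀ i, 0 < f i x :=
    Filter.eventually_all.2 fun i => ((hf i).tendsto x₀).eventually_const_lt (h₀ i)
  simpa using Metric.nhds_basis_closedBall.eventually_iff.1 this

namespace Matrix

section PairFrame

variable {m K : Type*} [DecidableEq m] [Field K]

def pairVec (z : Sym2 m) : m → K :=
  Sym2.lift ⟨fun k l => Pi.single k 1 + Pi.single l 1, fun _ _ => add_comm _ _⟩ z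

@[simp]
lemma pairVec_mk (k l : m) : pairVec (K := K) s(k, l) = Pi.single k 1 + Pi.single l 1 := rfl

lemma pairVec_apply_eq_zero {z : Sym2 m} {a : m} (h : a ∉ z) : pairVec (K := K) z a = 0 := by
  induction z using Sym2.ind with
  | h k l =>
    simp only [Sym2.mem_iff, not_or] at h
    simp [h.1, h.2]

lemma pairVec_ne_zero [CharZero K] (z : Sym2 m) : pairVec (K := K) z ≠ 0 := by
  induction z using Sym2.ind with
  | h k l =>
    intro h
    have hk := congrFun h k
    rcases eq_or_ne k l with rfl | hkl
    · simp at hk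
    · simp [hkl.symm] at hk

variable [Fintype m]

def pairCoeff (z : Sym2 m) : Matrix m m K →ₗ[K] K :=
  Sym2.lift ⟨fun k l =>
    if k = l then (4 : K)⁻¹ • (2 • entryLinearMap K K k k - ∑ j, entryLinearMap K K k j)
    else (2 : K)⁻¹ • (entryLinearMap K K k l + entryLinearMap K K l k), by
      intro k l
      rcases eq_or_ne k l with rfl | h
      · rfl
      · simp only [if_neg h, if_neg h.symm, add_comm]⟩ z

lemma pairCoeff_mk_self (k : m) (Q : Matrix m m K) :
    pairCoeff s(k, k) Q = (2 * Q k k - ∑ j, Q k j) / 4 := by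
  simp [pairCoeff, div_eq_inv_mul, two_smul, two_mul]

lemma pairCoeff_mk_of_ne {k l : m} (h : k ≠ l) (Q : Matrix m m K) :
    pairCoeff s(k, l) Q = (Q k l + Q l k) / 2 := by
  simp [pairCoeff, h, div_eq_inv_mul, mul_add]

lemma sum_pairCoeff_smul_vecMulVec [CharZero K] {Q : Matrix m m K} (hQ : Q.IsSymm) :
    ∑ z, pairCoeff z Q • vecMulVec (pairVec z) (pairVec z) = Q := by
  ext a b
  simp only [sum_apply, smul_apply, vecMulVec_apply, smul_eq_mul]
  -- only the pairs `s(a, l)` contribute to row `a`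
  rw [← Fintype.sum_of_injective (fun l => s(a, l)) (fun _ _ => Sym2.congr_right.mp)
    (fun l => pairCoeff s(a, l) Q * (pairVec s(a, l) a * pairVec s(a, l) b)) _
    (fun z hz => by
      rw [pairVec_apply_eq_zero (fun ha => hz ((Sym2.mem_iff_exists.mp ha).imp fun _ => Eq.symm)),
        zero_mul, mul_zero])
    (fun _ => rfl)]
  rcases eq_or_ne a b with rfl | hab
  · have hoff : ∀ l ∈ ({a}ᶜ : Finset m),
        pairCoeff s(a, l) Q * (pairVec s(a, l) a * pairVec s(a, l) a) = Q a l := fun l hl => by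
      have hl : a ≠ l := Ne.symm (by simpa using hl)
      simp [pairCoeff_mk_of_ne hl, hl, hQ.apply a l]
    rw [Fintype.sum_eq_add_sum_compl a, Finset.sum_congr rfl hoff, pairCoeff_mk_self,
      Fintype.sum_eq_add_sum_compl a (Q a), pairVec_mk, Pi.add_apply, Pi.single_eq_same]
    ring
  · rw [Finset.sum_eq_single b]
    · simp [pairCoeff_mk_of_ne hab, hab, hab.symm, hQ.apply a b]
    · intro l _ hlb
      simp [Pi.single_apply, hab.symm, Ne.symm hlb]
    · simp

lemma pairCoeff_pos [LinearOrder K] [IsStrictOrderedRing K] {Q : Matrix m m K}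
    (hoff : ∀ k l, k ≠ l → 0 < Q k l) (hdom : ∀ k, ∑ l, Q k l < 2 * Q k k) (z : Sym2 m) :
    0 < pairCoeff z Q := by
  induction z using Sym2.ind with
  | h k l =>
    rcases eq_or_ne k l with rfl | hkl
    · rw [pairCoeff_mk_self]
      linarith [hdom k]
    · rw [pairCoeff_mk_of_ne hkl]
      linarith [hoff k l hkl, hoff l k hkl.symm]

end PairFrame

lemma IsSymm.mul_mul_transpose {n α : Type*} [Fintype n] [CommSemiring α] {P : Matrix n n α}
    (hP : P.IsSymm) (B : Matrix n n α) : (B * P * Bᵀ).IsSymm := by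
  rw [IsSymm, transpose_mul, transpose_mul, transpose_transpose, hP.eq, Matrix.mul_assoc]

lemma mul_mul_transpose_cancel_of_mul_eq_one {n α : Type*} [Fintype n] [DecidableEq n]
    [CommSemiring α] {X Y : Matrix n n α} (h : X * Y = 1) (P : Matrix n n α) :
    X * (Y * P * Yᵀ) * Xᵀ = P := by
  rw [← Matrix.mul_assoc, ← Matrix.mul_assoc, h, Matrix.one_mul, Matrix.mul_assoc, ← transpose_mul,
    h, transpose_one, Matrix.mul_one]

lemma mul_vecMulVec_mul_transpose {l n α : Type*} [Fintype n] [CommSemiring α]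
    (A : Matrix l n α) (v : n → α) : A * vecMulVec v v * Aᵀ = vecMulVec (A *ᵥ v) (A *ᵥ v) := by
  rw [mul_vecMulVec, vecMulVec_mul, vecMul_transpose]

section Real

variable {m : Type*} [Fintype m] [DecidableEq m]

lemma exists_posDef_forall_pairCoeff_pos :
    ∃ Q : Matrix m m ℝ, Q.PosDef ∧ ∀ z, 0 < pairCoeff z Q := by
  refine ⟨(Fintype.card m + 1 : ℝ) • 1 + vecMulVec 1 1, ?_, pairCoeff_pos ?_ ?_⟩
  · simpa using (PosDef.one.smul (by positivity : (0 : ℝ) < Fintype.card m + 1)).add_posSemidef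
      (posSemidef_vecMulVec_self_star (1 : m → ℝ))
  · intro k l hkl
    simp [hkl]
  · intro k
    have : (Fintype.card m : ℝ) + 1 + Fintype.card m < 2 * (Fintype.card m + 1 + 1) := by linarith
    simpa [one_apply, Finset.sum_add_distrib] using this

open scoped MatrixOrder in
lemma PosDef.exists_mul_transpose_eq {P : Matrix m m ℝ} (hP : P.PosDef) :
    ∃ S : Matrix m m ℝ, IsUnit S.det ∧ S * Sᵀ = P := by
  obtain ⟨S, rfl⟩ := CStarAlgebra.nonneg_iff_eq_mul_star_self.mp hP.posSemidef.nonneg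
  have hdet : IsUnit (S * star S).det := (isUnit_iff_isUnit_det _).mp hP.isUnit
  rw [det_mul] at hdet
  exact ⟨S, isUnit_of_mul_isUnit_left hdet, rfl⟩

end Real

def HasPosRankOneExpansion {m K : Type*} [Field K] [LinearOrder K] (ι : Type*) [Fintype ι]
    (P₀ : Matrix m m K) : Prop :=
  ∃ (v : ι → m → K) (L : ι → Matrix m m K →ₗ[K] K), (∀ i, v i ≠ 0) ∧
    (∀ P : Matrix m m K, P.IsSymm → P = ∑ i, L i P • vecMulVec (v i) (v i)) ∧ ∀ i, 0 < L i P₀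

namespace HasPosRankOneExpansion

variable {m K ι : Type*} [Field K] [LinearOrder K] [Fintype ι]

lemma reindex {κ : Type*} [Fintype κ] {P₀ : Matrix m m K} (h : HasPosRankOneExpansion ι P₀)
    (e : κ ≃ ι) : HasPosRankOneExpansion κ P₀ := by
  obtain ⟨v, L, hv, hexp, hpos⟩ := h
  exact ⟨v ∘ e, L ∘ e, fun i => hv (e i), fun P hP => (hexp P hP).trans (e.sum_comp _).symm,
    fun i => hpos (e i)⟩

variable [Fintype m] [DecidableEq m]

lemma of_pairCoeff_pos [IsStrictOrderedRing K] {Q : Matrix m m K}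
    (hQ : ∀ z, 0 < pairCoeff z Q) : HasPosRankOneExpansion (Sym2 m) Q :=
  ⟨pairVec, pairCoeff, pairVec_ne_zero, fun _ hP => (sum_pairCoeff_smul_vecMulVec hP).symm, hQ⟩

lemma congr {Q : Matrix m m K} (h : HasPosRankOneExpansion ι Q) {A B : Matrix m m K}
    (hBA : B * A = 1) : HasPosRankOneExpansion ι (A * Q * Aᵀ) := by
  obtain ⟨v, L, hv, hexp, hpos⟩ := h
  refine ⟨fun i => A *ᵥ v i, fun i => L i ∘ₗ LinearMap.mulLeftRight K (B, Bᵀ), fun i hi => ?_,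
    fun P hP => ?_, fun i => ?_⟩
  · refine hv i ?_
    rw [← Matrix.one_mulVec (v i), ← hBA, ← mulVec_mulVec, show A *ᵥ v i = 0 from hi, mulVec_zero]
  · conv_lhs => rw [← mul_mul_transpose_cancel_of_mul_eq_one (mul_eq_one_comm.mp hBA) P,
      hexp _ (hP.mul_mul_transpose B), Finset.mul_sum, Finset.sum_mul]
    simp only [Matrix.mul_smul, Matrix.smul_mul, mul_vecMulVec_mul_transpose,
      LinearMap.comp_apply, LinearMap.mulLeftRight_apply]
  · simpa only [LinearMap.comp_apply, LinearMap.mulLeftRight_apply,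
      mul_mul_transpose_cancel_of_mul_eq_one hBA] using hpos i

end HasPosRankOneExpansion

variable {m ι : Type*} [Fintype m] [Fintype ι]

lemma PosDef.hasPosRankOneExpansion [DecidableEq m] {P₀ : Matrix m m ℝ} (hP₀ : P₀.PosDef) :
    HasPosRankOneExpansion (Sym2 m) P₀ := by
  obtain ⟨Q, hQ, hcoeff⟩ := exists_posDef_forall_pairCoeff_pos (m := m)
  obtain ⟨S, hS, rfl⟩ := hP₀.exists_mul_transpose_eq
  obtain ⟨T, hT, rfl⟩ := hQ.exists_mul_transpose_eq
  have hBA : T * S⁻¹ * (S * T⁻¹) = 1 := by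
    rw [Matrix.mul_assoc, nonsing_inv_mul_cancel_left _ _ hS, mul_nonsing_inv _ hT]
  have hP₀ : S * Sᵀ = S * T⁻¹ * (T * Tᵀ) * (S * T⁻¹)ᵀ := by
    rw [transpose_mul, Matrix.mul_assoc, Matrix.mul_assoc, Matrix.mul_assoc,
      nonsing_inv_mul_cancel_left _ _ hT, ← Matrix.mul_assoc Tᵀ, ← transpose_mul,
      nonsing_inv_mul _ hT, transpose_one, Matrix.one_mul]
  rw [hP₀]
  exact (HasPosRankOneExpansion.of_pairCoeff_pos hcoeff).congr hBA

theorem HasPosRankOneExpansion.exists_unit_expansion {P₀ : Matrix m m ℝ}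
    (h : HasPosRankOneExpansion ι P₀) :
    ∃ σ₀ : ℝ, 0 < σ₀ ∧ ∃ (ξ : ι → EuclideanSpace ℝ m) (L : ι → Matrix m m ℝ →ₗ[ℝ] ℝ),
      (∀ i, ‖ξ i‖ = 1) ∧
      (∀ P : Matrix m m ℝ, P.IsSymm →
        P = ∑ i, L i P • vecMulVec (fun j => ξ i j) (fun j => ξ i j)) ∧
      ∀ P : Matrix m m ℝ, ‖P - P₀‖ ≤ σ₀ → ∀ i, 0 < L i P := by
  obtain ⟨v, L, hv, hexp, hpos⟩ := h
  set r : ι → ℝ := fun i => ‖WithLp.toLp 2 (v i)‖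
  have hr : ∀ i, 0 < r i := fun i => norm_pos_iff.mpr (by simpa using hv i)
  obtain ⟨σ, hσ, hball⟩ := exists_pos_forall_dist_le_forall_pos
    (fun i => ((r i ^ 2) • L i).continuous_of_finiteDimensional)
    (fun i => mul_pos (pow_pos (hr i) 2) (hpos i))
  refine ⟨σ, hσ, fun i => (r i)⁻¹ • WithLp.toLp 2 (v i), fun i => r i ^ 2 • L i,
    fun i => norm_smul_inv_norm (by simpa using hv i), fun P hP => ?_,
    fun P hP => hball P (by rwa [dist_eq_norm])⟩
  conv_lhs => rw [hexp P hP]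
  refine Finset.sum_congr rfl fun i _ => ?_
  ext a b
  have := (hr i).ne'
  simp only [smul_apply, vecMulVec_apply, PiLp.smul_apply, LinearMap.smul_apply, smul_eq_mul]
  field_simp

end Matrix

theorem nash_decomposition_general (n : ℕ) (P₀ : Matrix (Fin n) (Fin n) ℝ)
    (hpd : P₀.PosDef) :
    ∃ σ₀ : ℝ, 0 < σ₀ ∧
      ∃ (ξ : Fin (n * (n + 1) / 2) → EuclideanSpace ℝ (Fin n))
        (L : Fin (n * (n + 1) / 2) → Matrix (Fin n) (Fin n) ℝ →ₗ[ℝ] ℝ),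
        (∀ i, ‖ξ i‖ = 1) ∧
        (∀ P : Matrix (Fin n) (Fin n) ℝ, P.IsSymm →
          P = ∑ i, L i P • Matrix.vecMulVec (fun j => ξ i j) (fun j => ξ i j)) ∧
        (∀ P : Matrix (Fin n) (Fin n) ℝ, P.IsSymm → ‖P - P₀‖ ≤ σ₀ →
          ∀ i, 0 < L i P) := by
  have hcard : Fintype.card (Sym2 (Fin n)) = n * (n + 1) / 2 := by
    simp [Sym2.card, Nat.choose_two_right, mul_comm]
  obtain ⟨σ₀, hσ₀, ξ, L, hξ, hexp, hpos⟩ :=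
    (hpd.hasPosRankOneExpansion.reindex (Fintype.equivFinOfCardEq hcard).symm).exists_unit_expansion
  exact ⟨σ₀, hσ₀, ξ, L, hξ, hexp, fun P _ => hpos P⟩

/-- Nash's decomposition of symmetric matrices into primitive metrics:
given a positive definite symmetric `P₀`, there are `σ₀ > 0`, unit vectors
`ξ i` (`i < n(n+1)/2`) and linear maps `L i` on matrices such that every
symmetric `P` equals `∑ i, L i P • ξ i ⊗ ξ i`, with `L i P > 0` whenever
`‖P - P₀‖ ≤ σ₀`. -/
theorem nash_decomposition (n : ℕ) (P₀ : Matrix (Fin n) (Fin n) ℝ)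
    (hsymm : P₀.IsSymm) (hpd : P₀.PosDef) :
    ∃ σ₀ : ℝ, 0 < σ₀ ∧
      ∃ (ξ : Fin (n * (n + 1) / 2) → EuclideanSpace ℝ (Fin n))
        (L : Fin (n * (n + 1) / 2) → Matrix (Fin n) (Fin n) ℝ →ₗ[ℝ] ℝ),
        (∀ i, ‖ξ i‖ = 1) ∧
        (∀ P : Matrix (Fin n) (Fin n) ℝ, P.IsSymm →
          P = ∑ i, L i P • Matrix.vecMulVec (fun j => ξ i j) (fun j => ξ i j)) ∧
        (∀ P : Matrix (Fin n) (Fin n) ℝ, P.IsSymm → ‖P - P₀‖ ≤ σ₀ →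
          ∀ i, 0 < L i P) :=
  nash_decomposition_general n P₀ hpd
end

section
/- Let N ≥ 1, 0 < θ < 1/(1+2N), α > 0, and b = 1 + 2Nθα/(1 − θ(1+2N)). If α < (1 − θ(1+2N))/(2(1−θ)), then b + 2θN(b−1) + 2θ(N−1)α < b² − θα. -/
/-! With `c = b - 1` and `D = 1 - θ(1+2N)`, the defining relation `c D = 2Nθα` turns the gap
`b² - θα - (b + 2θNc + 2θ(N-1)α)` into `c (c + θ) + θα`, which is positive as soon as `c ≥ 0`. -/

theorem sub_one_mul_eq_of_eq_one_add_div {b x D : ℝ} (hD : D ≠ 0) (hb : b = 1 + x / D) :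
    (b - 1) * D = x := by
  rw [hb, add_sub_cancel_left, div_mul_cancel₀ _ hD]

theorem lt_sq_sub_of_sub_one_mul_eq {N θ α b : ℝ} (hθ : 0 < θ) (hα : 0 < α) (hb1 : 0 ≤ b - 1)
    (hb : (b - 1) * (1 - θ * (1 + 2 * N)) = 2 * N * θ * α) :
    b + 2 * θ * N * (b - 1) + 2 * θ * (N - 1) * α < b ^ 2 - θ * α := by
  have gap : b ^ 2 - θ * α - (b + 2 * θ * N * (b - 1) + 2 * θ * (N - 1) * α)
      = (b - 1) * (b - 1 + θ) + θ * α := by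
    linear_combination hb
  have : 0 < (b - 1) * (b - 1 + θ) + θ * α := by positivity
  linarith

theorem refined_parameter_inequality_general (N : ℕ) (θ α b : ℝ)
    (hθ0 : 0 < θ) (hθ : θ < 1 / (1 + 2 * N))
    (hα : 0 < α)
    (hb : b = 1 + 2 * N * θ * α / (1 - θ * (1 + 2 * N))) :
    b + 2 * θ * N * (b - 1) + 2 * θ * (N - 1) * α < b ^ 2 - θ * α := by
  have hD : 0 < 1 - θ * (1 + 2 * N) := by
    rw [lt_div_iff₀ (by positivity)] at hθ
    linarith
  refine lt_sq_sub_of_sub_one_mul_eq hθ0 hα ?_ (sub_one_mul_eq_of_eq_one_add_div hD.ne' hb)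
  rw [hb, add_sub_cancel_left]
  positivity

/-- Refined parameter inequality: with `0 < θ < 1/(1+2N)`, `α > 0`,
`b = 1 + 2Nθα/(1 − θ(1+2N))`, if `α < (1 − θ(1+2N))/(2(1−θ))` then
`b + 2θN(b−1) + 2θ(N−1)α < b² − θα`. -/
theorem refined_parameter_inequality (N : ℕ) (hN : 1 ≤ N) (θ α b : ℝ)
    (hθ0 : 0 < θ) (hθ : θ < 1 / (1 + 2 * N))
    (hα : 0 < α)
    (hb : b = 1 + 2 * N * θ * α / (1 - θ * (1 + 2 * N)))
    (hαsmall : α < (1 - θ * (1 + 2 * N)) / (2 * (1 - θ))) :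
    b + 2 * θ * N * (b - 1) + 2 * θ * (N - 1) * α < b ^ 2 - θ * α :=
  refined_parameter_inequality_general N θ α b hθ0 hθ hα hb
end
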